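/- arXiv:2004.06242 — 4 statements merged into one kernel-verified Lean document; each statement's English description precedes it below -/
import Mathlib

section
/- The real algebraic set {(w,x,y,z) ∈ ℝ⁴ : w+x+y+z = 3+wy and wy = xz} is a smooth surface, i.e. at every point of the set the Jacobian of the two defining polynomials has rank 2. -/
/-
A `2 × 4` matrix has rank `2` as soon as one of its `2 × 2` minors is nonzero. For the Jacobian
of `w + x + y + z - 3 - wy` and `wy - xz`, the minors on columns `{w, y}` and `{x, z}` are
`w - y` and `z - x`. If both vanish, the equations become `w² = x²` and `2(w + x) = 3 + w²`,
and the minor on columns `{x, y}`, namely `w + x - wx`, cannot vanish as well: `x = w` forces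
`w ∈ {1, 3}` but `w ∈ {0, 2}`, while `x = -w` forces `w = 0` and then `0 = 3`.
-/

theorem Matrix.rank_eq_card_height_of_det_submatrix_ne_zero {m n K : Type*} [Fintype m]
    [DecidableEq m] [Fintype n] [Field K] (A : Matrix m n K) (c : m → n)
    (h : (A.submatrix id c).det ≠ 0) : A.rank = Fintype.card m := by
  refine le_antisymm A.rank_le_card_height ?_
  have hunit : IsUnit (A.submatrix id c) :=
    (Matrix.isUnit_iff_isUnit_det _).2 h.isUnit
  calc Fintype.card m = (A.submatrix id c).rank := (Matrix.rank_of_isUnit _ hunit).symm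
    _ ≤ A.rank := A.rank_submatrix_le id c

theorem add_sub_mul_ne_zero_of_sq_eq_sq {w x : ℝ} (h1 : w + x + w + x = 3 + w * w)
    (h2 : w * w = x * x) : w + x - w * x ≠ 0 := by
  intro h
  rcases mul_self_eq_mul_self_iff.1 h2 with rfl | rfl <;> nlinarith

/-- The real algebraic set {(w,x,y,z) : w+x+y+z = 3+wy, wy = xz} is smooth:
at every point of the set, the Jacobian matrix of the two defining polynomials
has rank 2. -/
theorem jacobian_rank_two (w x y z : ℝ)
    (h1 : w + x + y + z = 3 + w * y) (h2 : w * y = x * z) :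
    (!![1 - y, 1, 1 - w, 1; y, -z, w, -x] : Matrix (Fin 2) (Fin 4) ℝ).rank = 2 := by
  by_cases hwy : w = y
  · by_cases hxz : x = z
    · subst hwy hxz
      refine Matrix.rank_eq_card_height_of_det_submatrix_ne_zero _ ![1, 2] ?_
      convert add_sub_mul_ne_zero_of_sq_eq_sq h1 h2 using 1
      simp only [Matrix.det_fin_two, Matrix.submatrix_apply, id_eq, Matrix.of_apply, Matrix.cons_val]
      ring
    · refine Matrix.rank_eq_card_height_of_det_submatrix_ne_zero _ ![1, 3] ?_
      convert sub_ne_zero.2 (Ne.symm hxz) using 1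
      simp only [Matrix.det_fin_two, Matrix.submatrix_apply, id_eq, Matrix.of_apply, Matrix.cons_val]
      ring
  · refine Matrix.rank_eq_card_height_of_det_submatrix_ne_zero _ ![0, 2] ?_
    convert sub_ne_zero.2 hwy using 1
    simp only [Matrix.det_fin_two, Matrix.submatrix_apply, id_eq, Matrix.of_apply, Matrix.cons_val]
    ring
end

section
/- Let A, B be the matrices above with a₁ = a₂ = b₃ = b₄ = 1. Then the linear actions of A and B on ℝ⁴ each permute the set of five lines spanned by e₁, e₂, e₃, e₄, and e₁+e₂-e₃-e₄, acting as 3-cycles on this set with disjoint supports. -/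
open Matrix Submodule

theorem LinearMap.span_singleton_ne_of_apply_ne_zero {R M N : Type*} [Semiring R]
    [AddCommMonoid M] [Module R M] [AddCommMonoid N] [Module R N] (f : M →ₗ[R] N) {v w : M}
    (hv : f v ≠ 0) (hw : f w = 0) : R ∙ v ≠ R ∙ w := by
  intro h
  have hv_ker : v ∈ ker f := by
    rw [← span_singleton_le_iff_mem, h, span_singleton_le_iff_mem]
    exact hw
  exact hv hv_ker

theorem Matrix.map_mulVecLin_span_singleton {R m n : Type*} [CommSemiring R] [Fintype n]
    (M : Matrix m n R) (v : n → R) : Submodule.map M.mulVecLin (R ∙ v) = R ∙ (M *ᵥ v) := by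
  rw [map_span, Set.image_singleton, mulVecLin_apply]

theorem Matrix.map_mulVecLin_span_singleton_of_mulVec_eq_smul {R m n : Type*} [CommSemiring R]
    [Fintype n] {M : Matrix m n R} {v : n → R} {w : m → R} {c : R} (hc : IsUnit c)
    (h : M *ᵥ v = c • w) : Submodule.map M.mulVecLin (R ∙ v) = R ∙ w := by
  rw [map_mulVecLin_span_singleton, h, span_singleton_smul_eq hc]

/-- For a₁ = a₂ = b₃ = b₄ = 1, the matrices A and B each permute the five lines
in ℝ⁴ spanned by e₁, e₂, e₃, e₄ and e₁+e₂-e₃-e₄: A fixes the lines of e₁, e₂ and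
acts as the 3-cycle (e₃ e₄ v₅), while B fixes the lines of e₃, e₄ and acts as the
3-cycle (e₂ e₁ v₅); in particular the fixed lines of the two 3-cycles are
disjoint. -/
theorem five_lines_permuted (A B : Matrix (Fin 4) (Fin 4) ℝ)
    (hA : A = !![1, 0, 0, 1; 0, 1, 0, 1; 0, 0, 0, -1; 0, 0, 1, -1])
    (hB : B = !![-1, 1, 0, 0; -1, 0, 0, 0; 1, 0, 1, 0; 1, 0, 0, 1])
    (L₁ L₂ L₃ L₄ L₅ : Submodule ℝ (Fin 4 → ℝ))
    (h₁ : L₁ = ℝ ∙ ![1, 0, 0, 0]) (h₂ : L₂ = ℝ ∙ ![0, 1, 0, 0])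
    (h₃ : L₃ = ℝ ∙ ![0, 0, 1, 0]) (h₄ : L₄ = ℝ ∙ ![0, 0, 0, 1])
    (h₅ : L₅ = ℝ ∙ ![1, 1, -1, -1]) :
    (Submodule.map A.mulVecLin L₁ = L₁ ∧ Submodule.map A.mulVecLin L₂ = L₂ ∧
     Submodule.map A.mulVecLin L₃ = L₄ ∧ Submodule.map A.mulVecLin L₄ = L₅ ∧
     Submodule.map A.mulVecLin L₅ = L₃) ∧
    (Submodule.map B.mulVecLin L₃ = L₃ ∧ Submodule.map B.mulVecLin L₄ = L₄ ∧
     Submodule.map B.mulVecLin L₂ = L₁ ∧ Submodule.map B.mulVecLin L₁ = L₅ ∧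
     Submodule.map B.mulVecLin L₅ = L₂) ∧
    ({L₁, L₂} : Set (Submodule ℝ (Fin 4 → ℝ))) ∩ {L₃, L₄} = ∅ := by
  subst hA hB h₁ h₂ h₃ h₄ h₅
  have line := @map_mulVecLin_span_singleton_of_mulVec_eq_smul ℝ (Fin 4) (Fin 4) _ _
  refine ⟨⟨line isUnit_one ?_, line isUnit_one ?_, line isUnit_one ?_, line isUnit_one ?_,
      line isUnit_one ?_⟩,
    ⟨line isUnit_one ?_, line isUnit_one ?_, line isUnit_one ?_, line isUnit_one.neg ?_,
      line isUnit_one.neg ?_⟩, Set.eq_empty_iff_forall_notMem.mpr ?disjoint⟩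
  case disjoint =>
    have e₁_line_ne {w : Fin 4 → ℝ} (hw : w 0 = 0) : ℝ ∙ ![1, 0, 0, 0] ≠ ℝ ∙ w :=
      (LinearMap.proj 0).span_singleton_ne_of_apply_ne_zero (by simp) hw
    have e₂_line_ne {w : Fin 4 → ℝ} (hw : w 1 = 0) : ℝ ∙ ![0, 1, 0, 0] ≠ ℝ ∙ w :=
      (LinearMap.proj 1).span_singleton_ne_of_apply_ne_zero (by simp) hw
    rintro L ⟨rfl | rfl, h | h⟩
    exacts [e₁_line_ne rfl h, e₁_line_ne rfl h, e₂_line_ne rfl h, e₂_line_ne rfl h]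
  all_goals ext i; fin_cases i <;> simp
end

section
/- For real w, x, y, z, the characteristic polynomial identity: the 4×4 matrix AC (with A, B as above, C = ABA⁻¹B⁻¹, and w = a₁b₄, x = a₁b₃, y = a₂b₃, z = a₂b₄) has characteristic polynomial (λ-1)(λ³ + (-yx - w + 2x + 2y - z)λ² + (zw - 2w + x + y - 2z)λ - 1). -/
/-!
The first column of `A * Comm` is `e₁`, so expanding `det (X - A * Comm)` along that column splits
off the factor `X - 1` and leaves the characteristic polynomial of the lower right `3 × 3` block.
That one is `X³ - (trace) X² + (sum of principal 2 × 2 minors) X - det`, and in terms of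
`w, x, y, z` its coefficients are the ones claimed (the determinant is `1`, as `det A = det B = 1`).
-/

namespace Matrix

open Polynomial

variable {R : Type*} [CommRing R]

theorem charpoly_eq_X_sub_C_mul_charpoly_submatrix_succ {n : ℕ}
    (M : Matrix (Fin (n + 1)) (Fin (n + 1)) R) (hM : ∀ i : Fin n, M i.succ 0 = 0) :
    M.charpoly = (X - C (M 0 0)) * (M.submatrix Fin.succ Fin.succ).charpoly := by
  have hsub : M.charmatrix.submatrix Fin.succ Fin.succ =
      (M.submatrix Fin.succ Fin.succ).charmatrix := by
    ext i j : 1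
    by_cases h : i = j <;> simp [h]
  rw [charpoly, det_succ_column_zero, Fin.sum_univ_succ]
  simp [hM, charpoly, hsub]

theorem charpoly_fin_three (M : Matrix (Fin 3) (Fin 3) R) :
    M.charpoly = X ^ 3 - C M.trace * X ^ 2
      + C (M 0 0 * M 1 1 - M 0 1 * M 1 0 + M 0 0 * M 2 2 - M 0 2 * M 2 0
        + M 1 1 * M 2 2 - M 1 2 * M 2 1) * X - C M.det := by
  simp [charpoly, det_fin_three, trace_fin_three]
  ring

end Matrix

theorem A_mul_comm_eq (a₁ a₂ b₃ b₄ : ℝ) :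
    let A : Matrix (Fin 4) (Fin 4) ℝ := !![1, 0, 0, a₁; 0, 1, 0, a₂; 0, 0, 0, -1; 0, 0, 1, -1]
    let B : Matrix (Fin 4) (Fin 4) ℝ := !![-1, 1, 0, 0; -1, 0, 0, 0; b₃, 0, 1, 0; b₄, 0, 0, 1]
    A * (A * B * A ^ 2 * B ^ 2) =
      !![1, a₁*b₄ - 3*(a₁*b₃) + a₁^2*b₃^2 + a₂*b₃, -2*a₁ + a₁^2*b₃ + a₂, a₁;
         0, 1 + a₁*a₂*b₃^2 - a₁*b₃ + a₂*b₄ - 2*(a₂*b₃), -a₁ + a₁*a₂*b₃ - a₂, a₂;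
         0, a₁*b₄*b₃ - a₁*b₃^2 - 2*b₄ + b₃, a₁*b₄ - a₁*b₃, -1;
         0, -(a₁*b₃^2) - b₄ + 2*b₃, 1 - a₁*b₃, -1] := by
  ext i j
  fin_cases i <;> fin_cases j <;> simp [pow_two, Matrix.mul_apply, Fin.sum_univ_succ] <;> ring

open Polynomial in
/-- The characteristic polynomial of A·Comm, where Comm = ABA⁻¹B⁻¹ = ABA²B², is
(λ-1)(λ³ + (-yx - w + 2x + 2y - z)λ² + (zw - 2w + x + y - 2z)λ - 1), where
w = a₁b₄, x = a₁b₃, y = a₂b₃, z = a₂b₄. -/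
theorem charpoly_AC (a₁ a₂ b₃ b₄ w x y z : ℝ)
    (A B Comm : Matrix (Fin 4) (Fin 4) ℝ)
    (hA : A = !![1, 0, 0, a₁; 0, 1, 0, a₂; 0, 0, 0, -1; 0, 0, 1, -1])
    (hB : B = !![-1, 1, 0, 0; -1, 0, 0, 0; b₃, 0, 1, 0; b₄, 0, 0, 1])
    (hComm : Comm = A * B * A ^ 2 * B ^ 2)
    (hw : w = a₁ * b₄) (hx : x = a₁ * b₃) (hy : y = a₂ * b₃) (hz : z = a₂ * b₄) :
    (A * Comm).charpoly =
      (X - 1) * (X ^ 3 + Polynomial.C (-(y * x) - w + 2 * x + 2 * y - z) * X ^ 2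
        + Polynomial.C (z * w - 2 * w + x + y - 2 * z) * X - 1) := by
  subst hA hB hComm hw hx hy hz
  rw [A_mul_comm_eq, Matrix.charpoly_eq_X_sub_C_mul_charpoly_submatrix_succ
    _ (fun i => by fin_cases i <;> rfl), Matrix.charpoly_fin_three]
  congr 1
  simp [Matrix.trace_fin_three, Matrix.det_fin_three, map_ofNat]
  ring
end

section
/- If a monic real cubic polynomial λ³ + pλ² + qλ - 1 has nonnegative discriminant, then all its roots are real; consequently, for (w,x,y,z) on the surface {w+x+y+z = 3+wy, wy = xz} (away from xy - x - y = 0), all eigenvalues of the matrix AC are real. -/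
/-!
If `P (s + t i) = 0` with `t ≠ 0` for a real cubic `P = a X³ + b X² + c X + d`, the real and
imaginary parts of this equation determine `c` and `d`, and then
`discr P = -4 t² ((3 a s + b)² + (a t)²)² < 0`.
The matrix `A * Comm` has first column `e₁`, so its characteristic polynomial is `(X - 1)` times a
cubic in `w, x, y, z`. On the surface, `w` and `z` are rational functions of `x` and `y`, and the
discriminant of that cubic becomes a square divided by `(x y - x - y)⁶`.
-/

open Polynomial

namespace Cubic

theorem discr_mul_pow_six {R : Type*} [CommRing R] (P : Cubic R) (k : R) :
    P.discr * k ^ 6 = (⟨P.a, P.b * k, P.c * k ^ 2, P.d * k ^ 3⟩ : Cubic R).discr := by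
  simp only [discr]
  ring

theorem discr_eq_of_aeval_eq_zero {P : Cubic ℝ} {μ : ℂ} (hμ : aeval μ P.toPoly = 0)
    (him : μ.im ≠ 0) :
    P.discr = -4 * μ.im ^ 2 * ((3 * P.a * μ.re + P.b) ^ 2 + (P.a * μ.im) ^ 2) ^ 2 := by
  have hre := congrArg Complex.re hμ
  have him' := congrArg Complex.im hμ
  simp only [toPoly, pow_succ, pow_zero, one_mul, map_add, map_mul, aeval_C, Complex.coe_algebraMap,
    aeval_X, Complex.add_re, Complex.mul_re, Complex.ofReal_re, Complex.mul_im, Complex.ofReal_im,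
    zero_mul, sub_zero, Complex.zero_re, Complex.add_im, add_zero, Complex.zero_im] at hre him'
  set s := μ.re
  set t := μ.im
  have hc : P.c = P.a * t ^ 2 - 3 * P.a * s ^ 2 - 2 * P.b * s := by
    apply mul_left_cancel₀ him
    linear_combination him'
  have hd : P.d = (2 * P.a * s + P.b) * (s ^ 2 + t ^ 2) := by
    linear_combination hre - s * hc
  rw [discr, hc, hd]
  ring

theorem im_eq_zero_of_discr_nonneg {P : Cubic ℝ} (ha : P.a ≠ 0) (hdiscr : 0 ≤ P.discr)
    {μ : ℂ} (hμ : aeval μ P.toPoly = 0) : μ.im = 0 := by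
  by_contra him
  have : 0 < μ.im ^ 2 * ((3 * P.a * μ.re + P.b) ^ 2 + (P.a * μ.im) ^ 2) ^ 2 := by positivity
  linarith [discr_eq_of_aeval_eq_zero hμ him]

end Cubic

section CommRing

variable {R : Type*} [CommRing R]

def acCubic (w x y z : R) : Cubic R :=
  ⟨1, -(y * x) - w + 2 * x + 2 * y - z, z * w - 2 * w + x + y - 2 * z, -1⟩

theorem acCubic_discr_mul_pow_six {w x y z : R} (hsum : w + x + y + z = 3 + w * y)
    (hprod : w * y = x * z) :
    (acCubic w x y z).discr * (x * y - x - y) ^ 6 =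
      ((y ^ 2 - 3 * y + 3) * (x ^ 2 - 3 * x + 3) * (x - y) *
        (x ^ 2 * y ^ 2 - 3 * x ^ 2 * y - 3 * x * y ^ 2 + 3 * x ^ 2 + 3 * x * y + 3 * y ^ 2)) ^ 2 := by
  have hw : w * (x * y - x - y) = x * (x + y - 3) := by linear_combination -x * hsum - hprod
  have hz : z * (x * y - x - y) = y * (x + y - 3) := by
    linear_combination -y * hsum + (1 - y) * hprod
  have hb : (acCubic w x y z).b * (x * y - x - y) =
      (2 * x + 2 * y - x * y) * (x * y - x - y) - (x + y) * (x + y - 3) := by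
    simp only [acCubic]
    linear_combination -hw - hz
  have hc : (acCubic w x y z).c * (x * y - x - y) ^ 2 =
      x * y * (x + y - 3) ^ 2 - 2 * (x + y) * (x + y - 3) * (x * y - x - y)
        + (x + y) * (x * y - x - y) ^ 2 := by
    simp only [acCubic]
    linear_combination (w * (x * y - x - y) - 2 * (x * y - x - y)) * hz
      + (y * (x + y - 3) - 2 * (x * y - x - y)) * hw
  rw [Cubic.discr_mul_pow_six, hb, hc]
  simp only [Cubic.discr, acCubic]
  ring

theorem ac_eq {a₁ a₂ b₃ b₄ : R} {A B : Matrix (Fin 4) (Fin 4) R}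
    (hA : A = !![1, 0, 0, a₁; 0, 1, 0, a₂; 0, 0, 0, -1; 0, 0, 1, -1])
    (hB : B = !![-1, 1, 0, 0; -1, 0, 0, 0; b₃, 0, 1, 0; b₄, 0, 0, 1]) :
    A * (A * B * A ^ 2 * B ^ 2) =
      !![1, a₂ * b₃ + a₁ * b₄ - 3 * a₁ * b₃ + a₁ ^ 2 * b₃ ^ 2, a₂ - 2 * a₁ + a₁ ^ 2 * b₃, a₁;
         0, 1 + a₂ * b₄ - 2 * a₂ * b₃ - a₁ * b₃ + a₁ * a₂ * b₃ ^ 2, -a₂ - a₁ + a₁ * a₂ * b₃, a₂;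
         0, -2 * b₄ + b₃ + a₁ * b₃ * b₄ - a₁ * b₃ ^ 2, a₁ * b₄ - a₁ * b₃, -1;
         0, -b₄ + 2 * b₃ - a₁ * b₃ ^ 2, 1 - a₁ * b₃, -1] := by
  subst hA hB
  ext i j
  fin_cases i <;> fin_cases j <;> simp [Matrix.mul_apply, Fin.sum_univ_four, pow_two] <;> ring

theorem charpoly_ac_eq {a₁ a₂ b₃ b₄ : R} {A B : Matrix (Fin 4) (Fin 4) R}
    (hA : A = !![1, 0, 0, a₁; 0, 1, 0, a₂; 0, 0, 0, -1; 0, 0, 1, -1])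
    (hB : B = !![-1, 1, 0, 0; -1, 0, 0, 0; b₃, 0, 1, 0; b₄, 0, 0, 1]) :
    (A * (A * B * A ^ 2 * B ^ 2)).charpoly =
      (X - 1) * (acCubic (a₁ * b₄) (a₁ * b₃) (a₂ * b₃) (a₂ * b₄)).toPoly := by
  rw [ac_eq hA hB, Matrix.charpoly, Matrix.det_succ_column_zero, Fin.sum_univ_succ]
  simp [Fin.sum_univ_succ, Matrix.det_fin_three, Matrix.charmatrix_apply, Matrix.submatrix_apply,
    Cubic.toPoly, acCubic, Fin.succAbove, map_ofNat]
  ring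

end CommRing

theorem acCubic_discr_nonneg {w x y z : ℝ} (hsum : w + x + y + z = 3 + w * y)
    (hprod : w * y = x * z) (hk : x * y - x - y ≠ 0) : 0 ≤ (acCubic w x y z).discr :=
  nonneg_of_mul_nonneg_left ((acCubic_discr_mul_pow_six hsum hprod).symm ▸ sq_nonneg _)
    (by positivity)

/-- If a monic real cubic λ³ + pλ² + qλ - 1 has nonnegative discriminant then all
its complex roots are real; consequently, for (w,x,y,z) = (a₁b₄,a₁b₃,a₂b₃,a₂b₄)
on the surface {w+x+y+z = 3+wy, wy = xz} with xy - x - y ≠ 0, all eigenvalues of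
A·Comm (the complex roots of its characteristic polynomial) are real. -/
theorem eigenvalues_real :
    (∀ p q : ℝ,
      -18 * p * q + 4 * p ^ 3 + p ^ 2 * q ^ 2 - 4 * q ^ 3 - 27 ≥ 0 →
      ∀ μ : ℂ, μ ^ 3 + (p : ℂ) * μ ^ 2 + (q : ℂ) * μ - 1 = 0 → μ.im = 0) ∧
    (∀ a₁ a₂ b₃ b₄ w x y z : ℝ, ∀ A B Comm : Matrix (Fin 4) (Fin 4) ℝ,
      A = !![1, 0, 0, a₁; 0, 1, 0, a₂; 0, 0, 0, -1; 0, 0, 1, -1] →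
      B = !![-1, 1, 0, 0; -1, 0, 0, 0; b₃, 0, 1, 0; b₄, 0, 0, 1] →
      Comm = A * B * A ^ 2 * B ^ 2 →
      w = a₁ * b₄ → x = a₁ * b₃ → y = a₂ * b₃ → z = a₂ * b₄ →
      w + x + y + z = 3 + w * y → w * y = x * z →
      x * y - x - y ≠ 0 →
      ∀ μ : ℂ, (((A * Comm).map (algebraMap ℝ ℂ)).charpoly).IsRoot μ → μ.im = 0) := by
  refine ⟨fun p q hdiscr μ hμ => ?_, ?_⟩
  · refine Cubic.im_eq_zero_of_discr_nonneg (P := ⟨1, p, q, -1⟩) one_ne_zero ?_ ?_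
    · simp only [Cubic.discr]
      linarith
    · simpa [Cubic.toPoly, ← sub_eq_add_neg] using hμ
  · intro a₁ a₂ b₃ b₄ w x y z A B Comm hA hB hComm hw hx hy hz hsum hprod hk μ hμ
    subst hComm hw hx hy hz
    rw [Matrix.charpoly_map, charpoly_ac_eq hA hB, IsRoot, eval_map_algebraMap, map_mul,
      mul_eq_zero] at hμ
    rcases hμ with hμ | hμ
    · rw [map_sub, aeval_X, map_one, sub_eq_zero] at hμ
      simp [hμ]
    · exact Cubic.im_eq_zero_of_discr_nonneg one_ne_zero (acCubic_discr_nonneg hsum hprod hk) hμ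
end
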